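/- Summation identity (equation f2b1): For all integers j₁ ≥ j₃ ≥ 0 and all a ∈ ℂ with 1 + a q^j ≠ 0 for 0 ≤ j < j₁, one has Σ_{j₂=j₃}^{j₁} (−1)^{j₂} q^{binom(j₁−j₂,2)} / ((q;q)_{j₁−j₂} (q;q)_{j₂−j₃} (−a;q)_{j₂}) = (−1)^{j₃} a^{j₁−j₃} q^{binom(j₁−j₃,2) + binom(j₁,2) − binom(j₃,2)} / ((−a;q)_{j₁} (q;q)_{j₁−j₃}), where binom(m,2) = m(m−1)/2. -/

import Mathlib

open Finset

noncomputable def qPoch (a q : ℂ) (n : ℕ) : ℂ :=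
  ∏ t ∈ Finset.range n, (1 - a * q ^ t)

noncomputable def qPochInf (a q : ℂ) : ℂ :=
  ∏' t : ℕ, (1 - a * q ^ t)

def IsBaileyPair (q a : ℂ) (α β : ℕ → ℂ) : Prop :=
  ∀ n : ℕ, β n =
    ∑ t ∈ Finset.range (n + 1), α t / (qPoch q q (n - t) * qPoch (a * q) q (n + t))

/-!
Put `n = j₁ - j₃` and `b = -a q^{j₃}`. Since `(-a;q)_{j₃+k} = (-a;q)_{j₃} (b;q)_k`, the sum is
`(-1)^{j₃} / (-a;q)_{j₃}` times
`S_n(b) = ∑_{m+k=n} (-1)^k q^{C(m,2)} / ((q;q)_m (q;q)_k (b;q)_k)` (`qAltSum`),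
so it suffices to show `S_n(b) = (-b)^n q^{2 C(n,2)} / ((b;q)_n (q;q)_n)`. Splitting
`1 - q^{n+1} = q^k (1 - q^m) + (1 - q^k)` on the term `(m, k)` of `S_{n+1}(b)` and cancelling
against `(q;q)_m`, resp. `(q;q)_k` and `(b;q)_k = (1 - b) (bq;q)_{k-1}`, gives
`(1 - q^{n+1}) S_{n+1}(b) = q^n S_n(b) - S_n(bq) / (1 - b)`, and induction on `n` finishes.
-/

section qPoch

variable (a q : ℂ)

theorem qPoch_zero : qPoch a q 0 = 1 := by simp [qPoch]

theorem qPoch_succ (n : ℕ) : qPoch a q (n + 1) = qPoch a q n * (1 - a * q ^ n) :=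
  prod_range_succ _ _

theorem qPoch_add (m n : ℕ) : qPoch a q (m + n) = qPoch a q m * qPoch (a * q ^ m) q n := by
  simp only [qPoch, prod_range_add, pow_add, mul_assoc]

theorem qPoch_succ' (n : ℕ) : qPoch a q (n + 1) = (1 - a) * qPoch (a * q) q n := by
  rw [add_comm, qPoch_add, pow_one]
  simp [qPoch]

theorem qPoch_self_succ (n : ℕ) : qPoch q q (n + 1) = qPoch q q n * (1 - q ^ (n + 1)) := by
  rw [qPoch_succ, pow_succ']

variable {a q}

theorem qPoch_ne_zero_iff {n : ℕ} : qPoch a q n ≠ 0 ↔ ∀ t < n, 1 - a * q ^ t ≠ 0 := by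
  simp [qPoch, prod_ne_zero_iff]

theorem qPoch_self_ne_zero (hq : ‖q‖ < 1) (n : ℕ) : qPoch q q n ≠ 0 := by
  refine qPoch_ne_zero_iff.2 fun t _ => sub_ne_zero.2 fun h => ?_
  have : ‖q * q ^ t‖ < 1 := by
    rw [norm_mul, norm_pow]
    exact mul_lt_one_of_nonneg_of_lt_one_left (norm_nonneg q) hq
      (pow_le_one₀ (norm_nonneg q) hq.le)
  simp [← h] at this

end qPoch

theorem choose_two_succ (m : ℕ) : (m + 1).choose 2 = m.choose 2 + m := by
  rw [Nat.choose_succ_succ, Nat.choose_one_right, add_comm]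

theorem choose_two_add (m n : ℕ) : (m + n).choose 2 = m.choose 2 + n.choose 2 + m * n := by
  induction n with
  | zero => simp
  | succ n ih =>
    rw [← add_assoc, choose_two_succ, choose_two_succ, ih]
    ring

noncomputable def qAltTerm (q b : ℂ) (m k : ℕ) : ℂ :=
  (-1) ^ k * q ^ m.choose 2 / (qPoch q q m * qPoch q q k * qPoch b q k)

noncomputable def qAltSum (q b : ℂ) (n : ℕ) : ℂ :=
  ∑ p ∈ antidiagonal n, qAltTerm q b p.1 p.2

section qAltSum

variable {q : ℂ}

theorem qAltTerm_succ_left (b : ℂ) (m k : ℕ) (hm : 1 - q ^ (m + 1) ≠ 0) :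
    (1 - q ^ (m + 1)) * qAltTerm q b (m + 1) k = q ^ m * qAltTerm q b m k := by
  have h : qAltTerm q b (m + 1) k = (1 - q ^ (m + 1))⁻¹ * (q ^ m * qAltTerm q b m k) := by
    simp only [qAltTerm, qPoch_self_succ, choose_two_succ, pow_add, div_eq_mul_inv, mul_inv]
    ring
  rw [h, mul_inv_cancel_left₀ hm]

theorem qAltTerm_succ_right (b : ℂ) (m k : ℕ) (hk : 1 - q ^ (k + 1) ≠ 0) :
    (1 - q ^ (k + 1)) * qAltTerm q b m (k + 1) = -((1 - b)⁻¹ * qAltTerm q (b * q) m k) := by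
  have h : qAltTerm q b m (k + 1) =
      (1 - q ^ (k + 1))⁻¹ * -((1 - b)⁻¹ * qAltTerm q (b * q) m k) := by
    simp only [qAltTerm, qPoch_self_succ, qPoch_succ', pow_succ, div_eq_mul_inv, mul_inv]
    ring
  rw [h, mul_inv_cancel_left₀ hk]

theorem qAltSum_succ (b : ℂ) (n : ℕ) (hq : qPoch q q (n + 1) ≠ 0) :
    (1 - q ^ (n + 1)) * qAltSum q b (n + 1) =
      q ^ n * qAltSum q b n - (1 - b)⁻¹ * qAltSum q (b * q) n := by
  have hq' : ∀ m ≤ n, 1 - q ^ (m + 1) ≠ 0 := fun m hm => by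
    simpa [pow_succ'] using qPoch_ne_zero_iff.1 hq m (by omega)
  have hsplit : ∀ p ∈ antidiagonal (n + 1), (1 - q ^ (n + 1)) * qAltTerm q b p.1 p.2 =
      q ^ p.2 * ((1 - q ^ p.1) * qAltTerm q b p.1 p.2) + (1 - q ^ p.2) * qAltTerm q b p.1 p.2 := by
    intro p hp
    rw [← mem_antidiagonal.1 hp, pow_add]
    ring
  rw [qAltSum, mul_sum, sum_congr rfl hsplit, sum_add_distrib, Nat.sum_antidiagonal_succ,
    Nat.sum_antidiagonal_succ', qAltSum, qAltSum, mul_sum, mul_sum]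
  simp only [pow_zero, sub_self, zero_mul, mul_zero, zero_add]
  rw [sub_eq_add_neg, ← sum_neg_distrib]
  congr 1 <;> refine sum_congr rfl fun p hp => ?_ <;>
    have hpn : p.1 + p.2 = n := mem_antidiagonal.1 hp
  · rw [qAltTerm_succ_left b _ _ (hq' _ (by omega)), ← mul_assoc, ← pow_add, add_comm, hpn]
  · rw [qAltTerm_succ_right b _ _ (hq' _ (by omega))]

theorem qAltSum_eq (b : ℂ) (n : ℕ) (hq : qPoch q q n ≠ 0) (hb : qPoch b q n ≠ 0) :
    qAltSum q b n = (-b) ^ n * q ^ (2 * n.choose 2) / (qPoch b q n * qPoch q q n) := by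
  induction n generalizing b with
  | zero => simp [qAltSum, qAltTerm, qPoch_zero]
  | succ n ih =>
    have hrec := qAltSum_succ b n hq
    rw [qPoch_self_succ, mul_ne_zero_iff] at hq
    obtain ⟨hqn, hqn1⟩ := hq
    obtain ⟨hbn, hbqn⟩ := mul_ne_zero_iff.1 (qPoch_succ b q n ▸ hb)
    obtain ⟨hb1, hbq⟩ := mul_ne_zero_iff.1 (qPoch_succ' b q n ▸ hb)
    have hbq_eq : qPoch (b * q) q n = qPoch b q n * (1 - b * q ^ n) / (1 - b) := by
      rw [eq_div_iff hb1, mul_comm _ (1 - b), ← qPoch_succ', qPoch_succ]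
    rw [ih b hqn hbn, ih (b * q) hqn hbq, hbq_eq] at hrec
    apply mul_left_cancel₀ hqn1
    rw [hrec, qPoch_self_succ, qPoch_succ, choose_two_succ, mul_add, pow_add q (2 * _)]
    rw [mul_comm b] at hbqn
    field_simp
    ring

end qAltSum

theorem sum_Icc_add_eq_sum_antidiagonal {M : Type*} [AddCommMonoid M] (f : ℕ → M) (j n : ℕ) :
    ∑ i ∈ Icc j (j + n), f i = ∑ p ∈ antidiagonal n, f (j + p.2) := by
  rw [← Nat.sum_antidiagonal_swap, Nat.sum_antidiagonal_eq_sum_range_succ_mk,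
    ← Ico_add_one_right_eq_Icc, sum_Ico_eq_sum_range, show j + n + 1 - j = n + 1 by omega]
  rfl

theorem sum_Icc_eq_mul_qAltSum (q c : ℂ) (j n : ℕ) :
    ∑ i ∈ Icc j (j + n), (-1 : ℂ) ^ i * q ^ ((j + n - i).choose 2) /
        (qPoch q q (j + n - i) * qPoch q q (i - j) * qPoch c q i) =
      (-1) ^ j / qPoch c q j * qAltSum q (c * q ^ j) n := by
  rw [sum_Icc_add_eq_sum_antidiagonal, qAltSum, mul_sum]
  refine sum_congr rfl fun p hp => ?_
  rw [← mem_antidiagonal.1 hp, show j + (p.1 + p.2) - (j + p.2) = p.1 by omega,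
    Nat.add_sub_cancel_left, qPoch_add, qAltTerm, pow_add]
  simp only [div_eq_mul_inv, mul_inv]
  ring

theorem eqn_f2b1_general (q a : ℂ) (hq1 : ‖q‖ < 1)
    (j1 j3 : ℕ) (h : j3 ≤ j1) (ha : ∀ j : ℕ, j < j1 → 1 + a * q ^ j ≠ 0) :
    ∑ j2 ∈ Finset.Icc j3 j1,
      (-1 : ℂ) ^ j2 * q ^ ((j1 - j2).choose 2) /
        (qPoch q q (j1 - j2) * qPoch q q (j2 - j3) * qPoch (-a) q j2) =
    (-1 : ℂ) ^ j3 * a ^ (j1 - j3) *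
        q ^ ((j1 - j3).choose 2 + j1.choose 2 - j3.choose 2) /
      (qPoch (-a) q j1 * qPoch q q (j1 - j3)) := by
  obtain ⟨n, rfl⟩ := Nat.exists_eq_add_of_le h
  have hA : qPoch (-a) q (j3 + n) ≠ 0 :=
    qPoch_ne_zero_iff.2 fun t ht => by simpa [sub_eq_add_neg] using ha t ht
  rw [qPoch_add, mul_ne_zero_iff] at hA
  obtain ⟨hA₁, hA₂⟩ := hA
  rw [sum_Icc_eq_mul_qAltSum, qAltSum_eq _ n (qPoch_self_ne_zero hq1 n) hA₂,
    Nat.add_sub_cancel_left, qPoch_add, choose_two_add,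
    show n.choose 2 + (j3.choose 2 + n.choose 2 + j3 * n) - j3.choose 2 = 2 * n.choose 2 + j3 * n
      by omega]
  field_simp
  ring

theorem eqn_f2b1 (q a : ℂ) (hq0 : 0 < ‖q‖) (hq1 : ‖q‖ < 1)
    (j1 j3 : ℕ) (h : j3 ≤ j1) (ha : ∀ j : ℕ, j < j1 → 1 + a * q ^ j ≠ 0) :
    ∑ j2 ∈ Finset.Icc j3 j1,
      (-1 : ℂ) ^ j2 * q ^ ((j1 - j2).choose 2) /
        (qPoch q q (j1 - j2) * qPoch q q (j2 - j3) * qPoch (-a) q j2) =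
    (-1 : ℂ) ^ j3 * a ^ (j1 - j3) *
        q ^ ((j1 - j3).choose 2 + j1.choose 2 - j3.choose 2) /
      (qPoch (-a) q j1 * qPoch q q (j1 - j3)) :=
  eqn_f2b1_general q a hq1 j1 j3 h ha
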